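/- Single-variable geometric sum identity underlying the matrix product: for indeterminates x, y, z and M ≥ 0, ∑_{k=0}^{M} (x^{k+1} - x^{-k-1} - z⁻¹(x^k - x^{-k}))(y^{k+1} - y^{-k-1} - z⁻¹(y^k - y^{-k})) = x^{-(M+1)} y^{-(M+1)} p(x, y, z⁻¹, x^{2M+2}, y^{2M+2}), where p(x,y,w,a,b) = (1-xw)(1-yw)/(1-xy) - a(x-w)(1-yw)/(x-y) + b(1-xw)(y-w)/(x-y) - ab(x-w)(y-w)/(1-xy). -/
import Mathlib


/-- The rational function `p(x,y,w,a,b)` from the key lemma. -/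
noncomputable def pBKW {K : Type*} [Field K] (x y w a b : K) : K :=
  (1 - x*w)*(1 - y*w)/(1 - x*y)
    - a * ((x - w)*(1 - y*w)/(x - y))
    + b * ((1 - x*w)*(y - w)/(x - y))
    - a * b * ((x - w)*(y - w)/(1 - x*y))

set_option maxHeartbeats 1000000 in
lemma pBKW_eq {K : Type*} [Field K] (x y w : K)
    (h1 : 1 - x*y ≠ 0) (h2 : x - y ≠ 0) (A B : K) :
    pBKW x y w A B
    = ((1-x*w)*(1-y*w)*(x-y) - A*(x-w)*(1-y*w)*(1-x*y) + B*(1-x*w)*(y-w)*(1-x*y)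
        - A*B*(x-w)*(y-w)*(x-y)) / ((1-x*y)*(x-y)) := by
  unfold pBKW
  field_simp

lemma clear_denoms {K : Type*} [Field K] (x y a b D P1 P2 Q Q' : K)
    (hx : x ≠ 0) (hy : y ≠ 0) (ha : a ≠ 0) (hb : b ≠ 0) (hD : D ≠ 0)
    (hQ : (a*x)*(b*y)*Q = Q') (h : x*y*P1 + D*Q' = P2) :
    a⁻¹ * b⁻¹ * (P1 / D) + Q = (a*x)⁻¹ * (b*y)⁻¹ * (P2 / D) := by
  apply mul_left_cancel₀ (show a*b*x*y*D ≠ 0 from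
    mul_ne_zero (mul_ne_zero (mul_ne_zero (mul_ne_zero ha hb) hx) hy) hD)
  have e1 : a*b*x*y*D * (a⁻¹ * b⁻¹ * (P1 / D) + Q) = x*y*P1 + D*((a*x)*(b*y)*Q) := by
    field_simp
  have e2 : a*b*x*y*D * ((a*x)⁻¹ * (b*y)⁻¹ * (P2 / D)) = P2 := by
    field_simp
  rw [e1, e2, hQ, h]

lemma prod_clear {K : Type*} [Field K] (x y w a b : K)
    (hx : x ≠ 0) (hy : y ≠ 0) (ha : a ≠ 0) (hb : b ≠ 0) :
    (a*x)*(b*y)*((a*x - (a*x)⁻¹ - w*(a - a⁻¹)) * (b*y - (b*y)⁻¹ - w*(b - b⁻¹)))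
    = (a^2*x^2 - 1 - w*(a^2*x - x)) * (b^2*y^2 - 1 - w*(b^2*y - y)) := by
  field_simp

set_option maxHeartbeats 2000000 in
lemma key_alg {K : Type*} [Field K] (x y w a b : K)
    (hx : x ≠ 0) (hy : y ≠ 0) (ha : a ≠ 0) (hb : b ≠ 0)
    (h1 : 1 - x*y ≠ 0) (h2 : x - y ≠ 0) :
    a⁻¹ * b⁻¹ * pBKW x y w (a^2) (b^2)
      + (a*x - (a*x)⁻¹ - w*(a - a⁻¹)) * (b*y - (b*y)⁻¹ - w*(b - b⁻¹))
    = (a*x)⁻¹ * (b*y)⁻¹ * pBKW x y w (a^2*x^2) (b^2*y^2) := by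
  rw [pBKW_eq x y w h1 h2, pBKW_eq x y w h1 h2]
  exact clear_denoms x y a b _ _ _ _ _ hx hy ha hb (mul_ne_zero h1 h2)
    (prod_clear x y w a b hx hy ha hb) (by ring)

set_option maxHeartbeats 1000000 in
lemma base_alg {K : Type*} [Field K] (x y w : K)
    (hx : x ≠ 0) (hy : y ≠ 0) (h1 : 1 - x*y ≠ 0) (h2 : x - y ≠ 0) :
    (x - x⁻¹) * (y - y⁻¹) = x⁻¹ * y⁻¹ * pBKW x y w (x^2) (y^2) := by
  rw [pBKW_eq x y w h1 h2]
  apply mul_left_cancel₀ (show x*y*((1-x*y)*(x-y)) ≠ 0 from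
    mul_ne_zero (mul_ne_zero hx hy) (mul_ne_zero h1 h2))
  have e1 : x*y*((1-x*y)*(x-y)) * ((x - x⁻¹)*(y - y⁻¹))
      = (x^2-1)*(y^2-1)*((1-x*y)*(x-y)) := by
    field_simp
  have e2 : x*y*((1-x*y)*(x-y)) * (x⁻¹ * y⁻¹ *
      (((1-x*w)*(1-y*w)*(x-y) - (x^2)*(x-w)*(1-y*w)*(1-x*y)
        + (y^2)*(1-x*w)*(y-w)*(1-x*y) - (x^2)*(y^2)*(x-w)*(y-w)*(x-y))
        / ((1-x*y)*(x-y))))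
      = ((1-x*w)*(1-y*w)*(x-y) - (x^2)*(x-w)*(1-y*w)*(1-x*y)
        + (y^2)*(1-x*w)*(y-w)*(1-x*y) - (x^2)*(y^2)*(x-w)*(y-w)*(x-y)) := by
    field_simp
  rw [e1, e2]
  ring

/-- the single-variable geometric sum identity underlying the matrix product
`X·Yᵀ` in the proof of the BKW identity. -/
theorem stmt15 {K : Type*} [Field K] (x y z : K) (M : ℕ)
    (hx : x ≠ 0) (hy : y ≠ 0) (hz : z ≠ 0) (hxy : x ≠ y) (hxy1 : x * y ≠ 1) :
    ∑ k ∈ Finset.range (M+1),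
      (x ^ (k + 1 : ℤ) - x ^ (-(k + 1 : ℤ)) - z⁻¹ * (x ^ (k : ℤ) - x ^ (-(k : ℤ)))) *
      (y ^ (k + 1 : ℤ) - y ^ (-(k + 1 : ℤ)) - z⁻¹ * (y ^ (k : ℤ) - y ^ (-(k : ℤ))))
    = x ^ (-((M : ℤ) + 1)) * y ^ (-((M : ℤ) + 1)) *
        pBKW x y z⁻¹ (x ^ (2*M + 2)) (y ^ (2*M + 2)) := by
  have h1 : 1 - x*y ≠ 0 := fun h => hxy1 (by linear_combination -h)
  have h2 : x - y ≠ 0 := sub_ne_zero.mpr hxy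
  have conv1 : ∀ (w : K) (m : ℕ), w ^ (-((m:ℤ)+1)) = (w^(m+1))⁻¹ := by
    intro w m
    rw [show -((m:ℤ)+1) = -((m+1 : ℕ) : ℤ) by push_cast; ring, zpow_neg, zpow_natCast]
  have conv2 : ∀ (w : K) (m : ℕ), w ^ ((m:ℤ)+1) = w^(m+1) := by
    intro w m
    rw [show ((m:ℤ)+1) = ((m+1 : ℕ) : ℤ) by push_cast; ring, zpow_natCast]
  induction M with
  | zero =>
      simp only [Finset.sum_range_one, Nat.cast_zero, zero_add, zpow_one, neg_zero,
        zpow_zero, zpow_neg, sub_self, mul_zero, sub_zero]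
      norm_num
      exact base_alg x y z⁻¹ hx hy h1 h2
  | succ n ih =>
      rw [Finset.sum_range_succ, ih]
      simp only [conv1, conv2, zpow_neg, zpow_natCast]
      have h := key_alg x y z⁻¹ (x^(n+1)) (y^(n+1)) hx hy
        (pow_ne_zero _ hx) (pow_ne_zero _ hy) h1 h2
      rw [show (x^(n+1))^2 * x^2 = x^(2*(n+1)+2) by ring,
        show (y^(n+1))^2 * y^2 = y^(2*(n+1)+2) by ring,
        show (x^(n+1))^2 = x^(2*n+2) by ring,
        show (y^(n+1))^2 = y^(2*n+2) by ring,
        show x^(n+1)*x = x^(n+1+1) by ring,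
        show y^(n+1)*y = y^(n+1+1) by ring] at h
      exact h
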